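/- For all η ∈ A, ξ ∈ H, and φ ∈ A: K̂_{ξ+η}(φ) = K^η_ξ(φ) · exp( −i·θ(η,ξ) − (i/2)·B(ξ,ξ) − (1/4)·g(ξ,ξ) ). -/

import Mathlib

/-- The affine coherent state wave function `K̂_ζ : A → ℂ`,
`K̂_ζ(φ) = exp( (i/2)·θ(ζ, φ−ζ) + (i/2)·θ(φ, φ−ζ) − (1/4)·g(φ−ζ, φ−ζ) )`,
where `g(x,y) = Re ⟪x,y⟫`.  (For `ζ = η` this is also the wave function `α^η`.) -/
noncomputable def Khat {H A : Type*} [NormedAddCommGroup H] [InnerProductSpace ℂ H]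
    [AddTorsor H A] (θ : A → H → ℝ) (ζ φ : A) : ℂ :=
  Complex.exp ((Complex.I / 2) * ((θ ζ (φ -ᵥ ζ) : ℝ) : ℂ)
    + (Complex.I / 2) * ((θ φ (φ -ᵥ ζ) : ℝ) : ℂ)
    - (1/4 : ℂ) * (((inner ℂ (φ -ᵥ ζ) (φ -ᵥ ζ) : ℂ).re : ℝ) : ℂ))

/-- The coherent state wave function `K^η_ξ(φ) := exp( (1/2)·{ξ, φ−η} ) · α^η(φ)`,
where `α^η = K̂_η`. -/
noncomputable def Kbase {H A : Type*} [NormedAddCommGroup H] [InnerProductSpace ℂ H]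
    [AddTorsor H A] (θ : A → H → ℝ) (η : A) (ξ : H) (φ : A) : ℂ :=
  Complex.exp ((1/2 : ℂ) * (inner ℂ ξ (φ -ᵥ η) : ℂ)) * Khat θ η φ

/-!
Write `u = φ −ᵥ η`, so that `φ −ᵥ (ξ +ᵥ η) = u − ξ`. Expanding the exponent of `K̂_{ξ+η}(φ)` by
linearity of `θ`, the cocycle rule `θ(ξ + η, ·) = θ(η, ·) + B(ξ, ·)` and the polarisation of
`g(u − ξ, u − ξ)` leaves the exponent of `α^η(φ)`, the constant `−i θ(η,ξ) − (i/2) B(ξ,ξ) − g(ξ,ξ)/4`,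
and the cross term `g(ξ,u)/2 + (i/2)(B(ξ,u) − B(u,ξ))`. Since `B` is a potential for `ω`, the
latter is `⟪ξ, u⟫ / 2`, the exponent of the prefactor of `K^η_ξ(φ)`.
-/

section

variable {H A : Type*} [NormedAddCommGroup H] [InnerProductSpace ℂ H] [AddTorsor H A]

theorem inner_eq_re_add_sub_mul_I {B : H → H → ℝ}
    (hωB : ∀ ξ ξ' : H, (1/2 : ℝ) * (inner ℂ ξ ξ' : ℂ).im = (1/2 : ℝ) * (B ξ ξ' - B ξ' ξ))
    (ξ u : H) :
    inner ℂ ξ u = ((inner ℂ ξ u).re : ℂ) + ((B ξ u - B u ξ : ℝ) : ℂ) * Complex.I := by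
  have him : (inner ℂ ξ u).im = B ξ u - B u ξ := by linarith [hωB ξ u]
  rw [← him, Complex.re_add_im]

theorem re_inner_sub_sub_self (u ξ : H) :
    (inner ℂ (u - ξ) (u - ξ)).re
      = (inner ℂ u u).re - 2 * (inner ℂ ξ u).re + (inner ℂ ξ ξ).re := by
  have hsymm : (inner ℂ u ξ).re = (inner ℂ ξ u).re := inner_re_symm (𝕜 := ℂ) u ξ
  rw [inner_sub_sub_self, Complex.add_re, Complex.sub_re, Complex.sub_re, hsymm]
  ring

theorem theta_vadd_apply_sub {θ : A → H → ℝ} {B : H → H → ℝ}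
    (hθ : ∀ η : A, IsLinearMap ℝ (θ η)) (hB : ∀ x : H, IsLinearMap ℝ (B x))
    (hθB : ∀ (η : A) (ξ ξ' : H), θ (ξ +ᵥ η) ξ' = θ η ξ' + B ξ ξ') (η : A) (ξ u : H) :
    θ (ξ +ᵥ η) (u - ξ) = θ η u - θ η ξ + (B ξ u - B ξ ξ) := by
  rw [hθB, (hθ η).map_sub, (hB ξ).map_sub]

end

theorem statement4_general
    {H A : Type*} [NormedAddCommGroup H] [InnerProductSpace ℂ H]
    [AddTorsor H A]
    (θ : A → H → ℝ) (hθ : ∀ η : A, IsLinearMap ℝ (θ η))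
    (B : H → H → ℝ)
    (hB₂ : ∀ x : H, IsLinearMap ℝ (B x))
    (hθB : ∀ (η : A) (ξ ξ' : H), θ (ξ +ᵥ η) ξ' = θ η ξ' + B ξ ξ')
    (hωB : ∀ ξ ξ' : H,
      (1/2 : ℝ) * (inner ℂ ξ ξ' : ℂ).im = (1/2 : ℝ) * (B ξ ξ' - B ξ' ξ)) :
    ∀ (η : A) (ξ : H) (φ : A),
      Khat θ (ξ +ᵥ η) φ =
        Kbase θ η ξ φ *
          Complex.exp (-Complex.I * ((θ η ξ : ℝ) : ℂ)
            - (Complex.I / 2) * ((B ξ ξ : ℝ) : ℂ)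
            - (1/4 : ℂ) * (((inner ℂ ξ ξ : ℂ).re : ℝ) : ℂ)) := by
  intro η ξ φ
  have hθφ : θ φ ξ = θ η ξ + B (φ -ᵥ η) ξ := by rw [← hθB, vsub_vadd]
  unfold Kbase Khat
  rw [mul_assoc, ← Complex.exp_add, ← Complex.exp_add, vsub_vadd_eq_vsub_sub,
    theta_vadd_apply_sub hθ hB₂ hθB, (hθ φ).map_sub, hθφ,
    inner_eq_re_add_sub_mul_I hωB ξ (φ -ᵥ η), re_inner_sub_sub_self]
  congr 1
  push_cast
  ring

/-- For all `η ∈ A`, `ξ ∈ H`, and `φ ∈ A`: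
`K̂_{ξ+η}(φ) = K^η_ξ(φ) · exp( −i·θ(η,ξ) − (i/2)·B(ξ,ξ) − (1/4)·g(ξ,ξ) )`. -/
theorem statement4
    {H A : Type*} [NormedAddCommGroup H] [InnerProductSpace ℂ H] [CompleteSpace H]
    [AddTorsor H A]
    (θ : A → H → ℝ) (hθ : ∀ η : A, IsLinearMap ℝ (θ η))
    (B : H → H → ℝ)
    (hB₁ : ∀ y : H, IsLinearMap ℝ (fun x => B x y))
    (hB₂ : ∀ x : H, IsLinearMap ℝ (B x))
    (hθB : ∀ (η : A) (ξ ξ' : H), θ (ξ +ᵥ η) ξ' = θ η ξ' + B ξ ξ')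
    (hωB : ∀ ξ ξ' : H,
      (1/2 : ℝ) * (inner ℂ ξ ξ' : ℂ).im = (1/2 : ℝ) * (B ξ ξ' - B ξ' ξ)) :
    ∀ (η : A) (ξ : H) (φ : A),
      Khat θ (ξ +ᵥ η) φ =
        Kbase θ η ξ φ *
          Complex.exp (-Complex.I * ((θ η ξ : ℝ) : ℂ)
            - (Complex.I / 2) * ((B ξ ξ : ℝ) : ℂ)
            - (1/4 : ℂ) * (((inner ℂ ξ ξ : ℂ).re : ℝ) : ℂ)) :=
  statement4_general θ hθ B hB₂ hθB hωB
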